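/- Let X, S, A be finite nonempty types, μ a belief on X, γs : X → Δ(S) a signaling kernel, γr : A → ℝ≥0 a probability distribution on actions, Q : X × A → Δ(X) a transition kernel, and R : X × A → ℝ a reward function. Define the joint distribution p over (x, s, a, x') ∈ X × S × A × X by p(x,s,a,x') = μ(x)·γs(s|x)·γr(a)·Q(x'|x,a). Fix s ∈ S, a ∈ A, and r ∈ ℝ such that γr(a) > 0, Σ_x μ(x)·γs(s|x) > 0, and Σ_x F(μ,γs,s)(x)·1{R(x,a)=r} > 0. Then for every x', the conditional probability of the next state X' = x' given the event {S = s, A = a, R(X,a) = r} under p equals G(F(μ,γs,s), a, r)(x'); equivalently, Σ_{x : R(x,a)=r} μ(x)·γs(s|x)·γr(a)·Q(x'|x,a) = G(F(μ,γs,s),a,r)(x') · Σ_{x : R(x,a)=r} μ(x)·γs(s|x)·γr(a). That is, the one-period belief update factors as the composition of the sender update F followed by the receiver update G. -/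
import Mathlib


open scoped NNReal

/-- Sender belief-update map: `F μ γ s x = μ x · γ(s|x) / Σ_{x'} μ x' · γ(s|x')`. -/
noncomputable def senderUpdate {X S : Type*} [Fintype X]
    (μ : X → ℝ≥0) (γ : X → S → ℝ≥0) (s : S) : X → ℝ≥0 :=
  fun x => μ x * γ x s / ∑ x', μ x' * γ x' s

/-- Receiver belief-update map:
`G ν Q R a r x' = (Σ_x ν x · 1{R(x,a)=r} · Q(x'|x,a)) / (Σ_x ν x · 1{R(x,a)=r})`. -/
noncomputable def receiverUpdate {X A : Type*} [Fintype X]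
    (ν : X → ℝ≥0) (Q : X → A → X → ℝ≥0) (R : X → A → ℝ) (a : A) (r : ℝ) :
    X → ℝ≥0 :=
  fun x' => (∑ x, ν x * (if R x a = r then 1 else 0) * Q x a x') /
    ∑ x, ν x * (if R x a = r then 1 else 0)

/-- with joint law `p(x,s,a,x') = μ x · γs(s|x) · γr(a) · Q(x'|x,a)`,
the Bayes posterior on the next state given the event `{S = s, A = a, R(X,a) = r}`
equals `G(F(μ,γs,s), a, r)`; equivalently, for every `x'`,
`Σ_{x : R(x,a)=r} μ x · γs(s|x) · γr(a) · Q(x'|x,a)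
  = G(F(μ,γs,s),a,r)(x') · Σ_{x : R(x,a)=r} μ x · γs(s|x) · γr(a)`.
The one-period belief update factors as `G ∘ F`. -/
theorem onePeriod_update_factors {X S A : Type*}
    [Fintype X] [Nonempty X] [Fintype S] [Nonempty S] [Fintype A] [Nonempty A]
    (μ : X → ℝ≥0) (hμ : ∑ x, μ x = 1)
    (γs : X → S → ℝ≥0) (hγs : ∀ x, ∑ s, γs x s = 1)
    (γr : A → ℝ≥0) (hγr : ∑ a, γr a = 1)
    (Q : X → A → X → ℝ≥0) (hQ : ∀ x a, ∑ x', Q x a x' = 1)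
    (R : X → A → ℝ)
    (p : X → S → A → X → ℝ≥0)
    (hp : ∀ x s a x', p x s a x' = μ x * γs x s * γr a * Q x a x')
    (s : S) (a : A) (r : ℝ)
    (hγra : 0 < γr a)
    (hs : 0 < ∑ x, μ x * γs x s)
    (hr : 0 < ∑ x, senderUpdate μ γs s x * (if R x a = r then 1 else 0)) :
    ∀ x' : X,
      ∑ x ∈ Finset.univ.filter (fun x => R x a = r),
          μ x * γs x s * γr a * Q x a x' =
        receiverUpdate (senderUpdate μ γs s) Q R a r x' *
          ∑ x ∈ Finset.univ.filter (fun x => R x a = r),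
            μ x * γs x s * γr a := by

  intro x'
  set T : ℝ≥0 := ∑ x, μ x * γs x s with hT
  have hT0 : T ≠ 0 := hs.ne'
  set N : ℝ≥0 := ∑ x, μ x * γs x s * (if R x a = r then 1 else 0) * Q x a x' with hN
  set D : ℝ≥0 := ∑ x, μ x * γs x s * (if R x a = r then 1 else 0) with hD
  have hnum : (∑ x, senderUpdate μ γs s x * (if R x a = r then 1 else 0) * Q x a x')
      = N / T := by
    rw [hN, Finset.sum_div]
    refine Finset.sum_congr rfl fun x _ => ?_
    split <;> simp [senderUpdate, div_mul_eq_mul_div, ← hT]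
  have hden : (∑ x, senderUpdate μ γs s x * (if R x a = r then 1 else 0)) = D / T := by
    rw [hD, Finset.sum_div]
    refine Finset.sum_congr rfl fun x _ => ?_
    split <;> simp [senderUpdate, ← hT]
  have hD0 : D ≠ 0 := by
    intro h
    rw [hden, h, zero_div] at hr
    exact lt_irrefl 0 hr
  have hru : receiverUpdate (senderUpdate μ γs s) Q R a r x' = N / D := by
    rw [receiverUpdate, hnum, hden, div_div_div_eq, mul_comm T D, ← div_div_div_eq,
      div_self hT0, div_one]
  rw [hru]
  have h1 : (∑ x ∈ Finset.univ.filter (fun x => R x a = r),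
      μ x * γs x s * γr a * Q x a x') = N * γr a := by
    rw [hN, Finset.sum_mul, Finset.sum_filter]
    refine Finset.sum_congr rfl fun x _ => ?_
    split <;> ring_nf <;> simp
  have h2 : (∑ x ∈ Finset.univ.filter (fun x => R x a = r),
      μ x * γs x s * γr a) = D * γr a := by
    rw [hD, Finset.sum_mul, Finset.sum_filter]
    refine Finset.sum_congr rfl fun x _ => ?_
    split <;> ring_nf <;> simp
  rw [h1, h2, ← mul_assoc, div_mul_cancel₀ _ hD0]
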